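/- Monotone orderings yield corner peelings in median graphs: let G be a finite median graph, z a vertex, and v₁ = z, v₂, …, v_n an ordering of V(G) with d(z,v₁) ≤ d(z,v₂) ≤ ⋯ ≤ d(z,v_n). Then for each i, the vertex v_i is a corner of the induced subgraph G_i = G[{v₁,…,v_i}], i.e., v_i together with all its neighbors in G_i lies in a unique cube of G_i. -/

import Mathlib

/-- The metric interval between `u` and `v` in a graph `G`. -/
def interval {V : Type*} (G : SimpleGraph V) (u v : V) : Set V :=
  {w | G.dist u w + G.dist w v = G.dist u v}

/-- A graph is median if every triple of vertices has a unique median. -/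
def MedianGraph {V : Type*} (G : SimpleGraph V) : Prop :=
  ∀ x y z : V, ∃! m : V,
    m ∈ interval G x y ∧ m ∈ interval G y z ∧ m ∈ interval G z x

/-- The hypercube graph `Q_n`. -/
def cubeGraph (n : ℕ) : SimpleGraph (Fin n → Bool) :=
  SimpleGraph.fromRel (fun u v => (Finset.univ.filter fun i => u i ≠ v i).card = 1)

/-!
Rooted at `z`, a median graph is a meet-semilattice for the order `x ≤ y ↔ x ∈ interval G z y`, the
meet of `x` and `y` being their median with `z`. For a vertex `x` with set `D` of lower neighbours
(neighbours one step closer to `z`), meeting `x` with the elements of `A ⊆ D` descends `#A` levels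
and realises the metric of the cube on the subsets of `D`; the image is a cube through `x` and `D`.
In a monotone ordering the neighbours of `vᵢ` in `Gᵢ` are exactly its lower neighbours and the
other vertices of this cube are closer to `z`, so the cube lies in `Gᵢ`. It is the only such cube:
median graphs are `K₂,₃`-free, and in a `K₂,₃`-free graph an embedded cube is determined by one
vertex and its neighbours.
-/

open SimpleGraph Finset

namespace SimpleGraph

section Interval

variable {V : Type*} {G : SimpleGraph V} {u v w x y z : V}

lemma mem_interval_iff : w ∈ interval G u v ↔ G.dist u w + G.dist w v = G.dist u v := Iff.rfl

lemma left_mem_interval : u ∈ interval G u v := by simp [mem_interval_iff]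

lemma right_mem_interval : v ∈ interval G u v := by simp [mem_interval_iff]

lemma interval_comm : interval G u v = interval G v u := by
  ext w
  simp only [mem_interval_iff, G.dist_comm (u := w), G.dist_comm (v := u)]
  omega

lemma Connected.eq_of_mem_interval_of_adj (hc : G.Connected) (h : G.Adj u v)
    (hw : w ∈ interval G u v) : w = u ∨ w = v := by
  rw [mem_interval_iff, dist_eq_one_iff_adj.2 h] at hw
  rcases Nat.eq_zero_or_pos (G.dist u w) with hu | hu
  · exact .inl (hc.dist_eq_zero_iff.1 hu).symm
  · exact .inr (hc.dist_eq_zero_iff.1 (by omega))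

lemma Connected.mem_interval_of_mem_interval (hc : G.Connected) (hw : w ∈ interval G z y)
    (hx : x ∈ interval G w y) : x ∈ interval G z y ∧ w ∈ interval G z x := by
  simp only [mem_interval_iff] at *
  have := hc.dist_triangle (u := z) (v := x) (w := y)
  have := hc.dist_triangle (u := z) (v := w) (w := x)
  constructor <;> omega

lemma Connected.mem_interval_trans (hc : G.Connected) (hxy : x ∈ interval G z y)
    (hyw : y ∈ interval G z w) : x ∈ interval G z w := by
  simp only [mem_interval_iff] at *
  have := hc.dist_triangle (u := x) (v := y) (w := w)
  have := hc.dist_triangle (u := z) (v := x) (w := w)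
  omega

lemma Connected.eq_of_mem_interval_of_mem_interval (hc : G.Connected) (hxy : x ∈ interval G z y)
    (hyx : y ∈ interval G z x) : x = y := by
  simp only [mem_interval_iff] at *
  rw [G.dist_comm (u := y)] at hyx
  exact hc.dist_eq_zero_iff.1 (by omega)

end Interval

variable {V : Type*} (G : SimpleGraph V)

def lowerNeighbors (z x : V) : Set V := {u | G.Adj x u ∧ G.dist z u + 1 = G.dist z x}

def IsK23Free : Prop :=
  ∀ ⦃u w a b c : V⦄, a ≠ b → a ≠ c → b ≠ c → G.Adj u a → G.Adj u b → G.Adj u c →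
    G.Adj w a → G.Adj w b → G.Adj w c → u = w

variable {G}

lemma mem_interval_of_mem_lowerNeighbors {z x a : V} (ha : a ∈ G.lowerNeighbors z x) :
    a ∈ interval G z x := by
  rw [mem_interval_iff, G.dist_comm (u := a), dist_eq_one_iff_adj.2 ha.1]
  exact ha.2

end SimpleGraph

namespace MedianGraph

variable {V : Type*} {G : SimpleGraph V} (hm : MedianGraph G)

noncomputable def median (x y w : V) : V := (hm x y w).exists.choose

lemma median_mem (x y w : V) :
    hm.median x y w ∈ interval G x y ∧ hm.median x y w ∈ interval G y w ∧
      hm.median x y w ∈ interval G w x :=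
  (hm x y w).exists.choose_spec

lemma eq_median {x y w m : V} (h₁ : m ∈ interval G x y) (h₂ : m ∈ interval G y w)
    (h₃ : m ∈ interval G w x) : m = hm.median x y w :=
  (hm x y w).unique ⟨h₁, h₂, h₃⟩ (hm.median_mem x y w)

section Connected

variable (hc : G.Connected)
include hm hc

lemma not_adj_of_adj_of_adj {x y w : V} (hxy : G.Adj x y) (hyw : G.Adj y w) : ¬G.Adj x w := by
  intro hxw
  obtain ⟨h₁, h₂, h₃⟩ := hm.median_mem x y w
  have := hxy.ne; have := hyw.ne; have := hxw.ne
  rcases hc.eq_of_mem_interval_of_adj hxy h₁ with h | h <;>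
    rcases hc.eq_of_mem_interval_of_adj hyw h₂ with h' | h' <;>
    rcases hc.eq_of_mem_interval_of_adj hxw.symm h₃ with h'' | h'' <;>
    grind

lemma dist_eq_two_of_adj_of_adj {x a b : V} (ha : G.Adj x a) (hb : G.Adj x b) (hab : a ≠ b) :
    G.dist a b = 2 := by
  have := hc.one_lt_dist_of_ne_of_not_adj hab (hm.not_adj_of_adj_of_adj hc ha.symm hb)
  have := hc.dist_triangle (u := a) (v := x) (w := b)
  rw [dist_eq_one_iff_adj.2 ha.symm, dist_eq_one_iff_adj.2 hb] at this
  omega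

lemma mem_interval_of_adj_of_adj {x a b : V} (ha : G.Adj x a) (hb : G.Adj x b) (hab : a ≠ b) :
    x ∈ interval G a b := by
  rw [mem_interval_iff, hm.dist_eq_two_of_adj_of_adj hc ha hb hab, dist_eq_one_iff_adj.2 ha.symm,
    dist_eq_one_iff_adj.2 hb]

/-- Two common neighbours of three distinct vertices are both their median. -/
lemma isK23Free : G.IsK23Free := by
  intro u w a b c hab hac hbc hua hub huc hwa hwb hwc
  have median_eq {v : V} (hva : G.Adj v a) (hvb : G.Adj v b) (hvc : G.Adj v c) :
      v = hm.median a b c :=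
    hm.eq_median (hm.mem_interval_of_adj_of_adj hc hva hvb hab)
      (hm.mem_interval_of_adj_of_adj hc hvb hvc hbc)
      (hm.mem_interval_of_adj_of_adj hc hvc hva hac.symm)
  exact (median_eq hua hub huc).trans (median_eq hwa hwb hwc).symm

lemma dist_add_one_eq_or_of_adj (z : V) {x y : V} (hxy : G.Adj x y) :
    G.dist z x + 1 = G.dist z y ∨ G.dist z y + 1 = G.dist z x := by
  obtain ⟨h₁, h₂, h₃⟩ := hm.median_mem x y z
  rcases hc.eq_of_mem_interval_of_adj hxy h₁ with h | h <;> rw [h] at h₂ h₃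
  · rw [mem_interval_iff, dist_eq_one_iff_adj.2 hxy.symm, G.dist_comm (u := x),
      G.dist_comm (u := y)] at h₂
    omega
  · rw [mem_interval_iff, dist_eq_one_iff_adj.2 hxy.symm] at h₃
    omega

end Connected

/-- The meet of `x` and `y` for the order `x ≤ y ↔ x ∈ interval G z y` rooted at `z`. -/
noncomputable def meet (z x y : V) : V := hm.median x y z

variable {z x y w : V}

lemma meet_mem_interval_left : hm.meet z x y ∈ interval G z x := (hm.median_mem x y z).2.2

lemma meet_mem_interval_right : hm.meet z x y ∈ interval G z y :=
  interval_comm (G := G) ▸ (hm.median_mem x y z).2.1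

lemma meet_eq_left (h : x ∈ interval G z y) : hm.meet z x y = x :=
  (hm.eq_median left_mem_interval (interval_comm (G := G) ▸ h) right_mem_interval).symm

lemma meet_self : hm.meet z x x = x := hm.meet_eq_left right_mem_interval

lemma dist_add_two_mul_dist_meet :
    G.dist x y + 2 * G.dist z (hm.meet z x y) = G.dist z x + G.dist z y := by
  have h₁ := (hm.median_mem x y z).1
  have h₂ := hm.meet_mem_interval_left (z := z) (x := x) (y := y)
  have h₃ := hm.meet_mem_interval_right (z := z) (x := x) (y := y)
  simp only [meet, mem_interval_iff, G.dist_comm (u := x)] at *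
  omega

section Connected

variable (hc : G.Connected)
include hm hc

lemma mem_interval_meet (hx : w ∈ interval G z x) (hy : w ∈ interval G z y) :
    w ∈ interval G z (hm.meet z x y) := by
  obtain ⟨h₁, h₂, h₃⟩ := hm.median_mem x y w
  obtain ⟨hmy, hwm⟩ := hc.mem_interval_of_mem_interval hy (interval_comm (G := G) ▸ h₂)
  obtain ⟨hmx, -⟩ := hc.mem_interval_of_mem_interval hx h₃
  rwa [hm.eq_median h₁ (interval_comm (G := G) ▸ hmy) hmx] at hwm

lemma meet_comm (z x y : V) : hm.meet z x y = hm.meet z y x :=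
  hc.eq_of_mem_interval_of_mem_interval
    (hm.mem_interval_meet hc hm.meet_mem_interval_right hm.meet_mem_interval_left)
    (hm.mem_interval_meet hc hm.meet_mem_interval_right hm.meet_mem_interval_left)

lemma meet_assoc (z x y w : V) :
    hm.meet z (hm.meet z x y) w = hm.meet z x (hm.meet z y w) := by
  have h₁ := hm.meet_mem_interval_left (z := z) (x := hm.meet z x y) (y := w)
  have h₂ := hm.meet_mem_interval_right (z := z) (x := hm.meet z x y) (y := w)
  have h₃ := hm.meet_mem_interval_left (z := z) (x := x) (y := hm.meet z y w)
  have h₄ := hm.meet_mem_interval_right (z := z) (x := x) (y := hm.meet z y w)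
  refine hc.eq_of_mem_interval_of_mem_interval (hm.mem_interval_meet hc ?_ ?_)
    (hm.mem_interval_meet hc (hm.mem_interval_meet hc ?_ ?_) ?_)
  · exact hc.mem_interval_trans h₁ hm.meet_mem_interval_left
  · exact hm.mem_interval_meet hc (hc.mem_interval_trans h₁ hm.meet_mem_interval_right) h₂
  · exact h₃
  · exact hc.mem_interval_trans h₄ hm.meet_mem_interval_left
  · exact hc.mem_interval_trans h₄ hm.meet_mem_interval_right

lemma meet_left_comm (z x y w : V) :
    hm.meet z x (hm.meet z y w) = hm.meet z y (hm.meet z x w) := by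
  rw [← hm.meet_assoc hc, hm.meet_comm hc z x y, hm.meet_assoc hc]

end Connected

end MedianGraph

section Hamming

variable {ι β : Type*} [Fintype ι] [DecidableEq ι] [DecidableEq β]

lemma hammingDist_update_self {f : ι → β} {a : ι} {b : β} (h : f a ≠ b) :
    hammingDist f (Function.update f a b) = 1 := by
  rw [hammingDist, card_eq_one]
  refine ⟨a, ?_⟩
  ext j
  rcases eq_or_ne j a with rfl | hj <;> simp [*]

lemma hammingDist_update_lt {f g : ι → β} {a : ι} (h : f a ≠ g a) :
    hammingDist (Function.update f a (g a)) g < hammingDist f g := by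
  refine card_lt_card ⟨fun j => ?_, fun hsub => ?_⟩
  · rcases eq_or_ne j a with rfl | hj <;> simp [*]
  · simpa using hsub (by simpa using h : a ∈ ({j | f j ≠ g j} : Finset ι))

lemma hammingDist_eq_card_sdiff_add_card_sdiff (f g : ι → Bool) :
    hammingDist f g = #(({j | f j} : Finset ι) \ ({j | g j} : Finset ι)) +
      #(({j | g j} : Finset ι) \ ({j | f j} : Finset ι)) := by
  rw [hammingDist, ← card_union_of_disjoint disjoint_sdiff_sdiff]
  congr 1
  ext j
  cases hf : f j <;> cases hg : g j <;> simp [hf, hg]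

end Hamming

section Cube

variable {m : ℕ}

lemma cubeGraph_adj {f g : Fin m → Bool} : (cubeGraph m).Adj f g ↔ hammingDist f g = 1 := by
  change f ≠ g ∧ (hammingDist f g = 1 ∨ hammingDist g f = 1) ↔ _
  rw [hammingDist_comm g f, or_self]
  exact ⟨And.right, fun h => ⟨fun hfg => by simp [hfg] at h, h⟩⟩

lemma cubeGraph_adj_update {f : Fin m → Bool} {j : Fin m} {b : Bool} (h : f j ≠ b) :
    (cubeGraph m).Adj f (Function.update f j b) :=
  cubeGraph_adj.2 (hammingDist_update_self h)

lemma exists_eq_update_bot_of_adj {f : Fin m → Bool} (h : (cubeGraph m).Adj ⊥ f) :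
    ∃ j, f = Function.update ⊥ j true := by
  obtain ⟨j, hj⟩ := card_eq_one.1 (cubeGraph_adj.1 h)
  refine ⟨j, funext fun t => ?_⟩
  have ht := Finset.ext_iff.1 hj t
  rcases eq_or_ne t j with rfl | htj
  · simpa using ht
  · simpa [htj] using ht

def cubeGraphXorIso (c : Fin m → Bool) : cubeGraph m ≃g cubeGraph m where
  toEquiv := Function.Involutive.toPerm (fun f j => xor (f j) (c j)) fun f => by simp
  map_rel_iff' {f g} := by
    rw [cubeGraph_adj, cubeGraph_adj]
    change hammingDist (fun j => xor (f j) (c j)) (fun j => xor (g j) (c j)) = 1 ↔ _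
    simp only [hammingDist, ne_eq, Bool.bne_left_inj]

variable {V : Type*} {G : SimpleGraph V}

def cubeEmbeddingOfDist (ψ : (Fin m → Bool) → V)
    (hψ : ∀ f g, G.dist (ψ f) (ψ g) = hammingDist f g) :
    cubeGraph m ↪g G where
  toFun := ψ
  inj' f g h := hammingDist_eq_zero.1 (by rw [← hψ, h, dist_self])
  map_rel_iff' {f g} := by
    change G.Adj (ψ f) (ψ g) ↔ _
    rw [← dist_eq_one_iff_adj, hψ, cubeGraph_adj]

/-- By induction on the weight of `f`: `ψ₁ f` and `ψ₂ f` are common neighbours of the images of two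
lower neighbours of `f`, which already have a third common neighbour. -/
lemma SimpleGraph.IsK23Free.cubeGraph_embedding_ext (hK : G.IsK23Free) {ψ₁ ψ₂ : cubeGraph m ↪g G}
    (h₀ : ψ₁ ⊥ = ψ₂ ⊥) (h₁ : ∀ f, (cubeGraph m).Adj ⊥ f → ψ₁ f = ψ₂ f) : ψ₁ = ψ₂ := by
  ext f
  induction hn : hammingDist f ⊥ using Nat.strong_induction_on generalizing f with
  | _ n ih =>
  obtain hn0 | hn1 | hn2 : n = 0 ∨ n = 1 ∨ 1 < n := by omega
  · rw [hammingDist_eq_zero.1 (hn.trans hn0), h₀]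
  · exact h₁ f (cubeGraph_adj.2 (by rw [hammingDist_comm, hn, hn1]))
  obtain ⟨a, ha, b, hb, hab⟩ := one_lt_card.1 (hn ▸ hn2 : 1 < hammingDist f ⊥)
  have adj {k : Fin m → Bool} {j : Fin m} (hj : k j = true) (ψ : cubeGraph m ↪g G) :
      G.Adj (ψ k) (ψ (Function.update k j false)) :=
    ψ.map_rel_iff.2 (cubeGraph_adj_update (by simp [hj]))
  have lt {k : Fin m → Bool} {j : Fin m} (hj : k j = true) :
      hammingDist (Function.update k j false) ⊥ < hammingDist k ⊥ :=
    hammingDist_update_lt (g := ⊥) (by simp [hj])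
  simp only [mem_filter, mem_univ, true_and, Pi.bot_apply, bot_eq_false, ne_eq,
    Bool.not_eq_false] at ha hb
  set g := Function.update f a false
  set h := Function.update f b false
  set w := Function.update g b false
  have hgb : g b = true := by simpa [g, Function.update_of_ne hab.symm] using hb
  have hha : h a = true := by simpa [h, Function.update_of_ne hab] using ha
  have hwh : w = Function.update h a false := Function.update_comm hab _ _ f
  have hg : hammingDist g ⊥ < n := hn ▸ lt ha
  have hh : hammingDist h ⊥ < n := hn ▸ lt hb
  have hw : hammingDist w ⊥ < n := (lt hgb).trans hg
  have hgh : ψ₁ g ≠ ψ₁ h := ψ₁.injective.ne fun hgh => by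
    simpa [g, h, Function.update_of_ne hab, ha] using congrFun hgh a
  have hfw : f ≠ w := fun hfw => by
    simpa [w, g, ha, Function.update_of_ne hab] using congrFun hfw a
  have hg' : ψ₁ g = ψ₂ g := ih _ hg g rfl
  have hh' : ψ₁ h = ψ₂ h := ih _ hh h rfl
  have hw' : ψ₁ w = ψ₂ w := ih _ hw w rfl
  by_contra hne
  exact hgh (hK hne (ψ₁.injective.ne hfw) (hw' ▸ ψ₂.injective.ne hfw) (adj ha ψ₁).symm
    (hg' ▸ (adj ha ψ₂).symm) (adj hgb ψ₁) (adj hb ψ₁).symm (hh' ▸ (adj hb ψ₂).symm)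
    (hwh ▸ adj hha ψ₁))

end Cube

namespace MedianGraph

variable {V : Type*} {G : SimpleGraph V} (hm : MedianGraph G) (hc : G.Connected) {z x a b u : V}
  {m : ℕ}
include hm hc

lemma meet_mem_lowerNeighbors (ha : a ∈ G.lowerNeighbors z x) (hb : b ∈ G.lowerNeighbors z x)
    (hab : a ≠ b) : hm.meet z a b ∈ G.lowerNeighbors z a := by
  have hsum := hm.dist_add_two_mul_dist_meet (z := z) (x := a) (y := b)
  have hmem := hm.meet_mem_interval_left (z := z) (x := a) (y := b)
  rw [hm.dist_eq_two_of_adj_of_adj hc ha.1 hb.1 hab] at hsum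
  rw [mem_interval_iff] at hmem
  have hdist : G.dist a (hm.meet z a b) = 1 := by
    have ha₂ : G.dist z a + 1 = G.dist z x := ha.2
    have hb₂ : G.dist z b + 1 = G.dist z x := hb.2
    rw [G.dist_comm]
    omega
  exact ⟨dist_eq_one_iff_adj.1 hdist, by rw [G.dist_comm] at hdist; omega⟩

lemma injOn_meet (ha : a ∈ G.lowerNeighbors z x) :
    Set.InjOn (hm.meet z a) (G.lowerNeighbors z x \ {a}) := by
  rintro b ⟨hb, hba⟩ c ⟨hc', hca⟩ hbc
  by_contra hne
  have hab : a ≠ b := Ne.symm hba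
  have hac : a ≠ c := Ne.symm hca
  have hma := hm.meet_mem_lowerNeighbors hc ha hb hab
  have hmb := hm.meet_comm hc z a b ▸ hm.meet_mem_lowerNeighbors hc hb ha hba
  have hmc := hm.meet_comm hc z a c ▸ hm.meet_mem_lowerNeighbors hc hc' ha hca
  rw [← hbc] at hmc
  have hxm : x = hm.meet z a b :=
    hm.isK23Free hc hab hac hne ha.1 hb.1 hc'.1 hma.1.symm hmb.1.symm hmc.1.symm
  have hm₂ : G.dist z (hm.meet z a b) + 1 = G.dist z a := hma.2
  have ha₂ : G.dist z a + 1 = G.dist z x := ha.2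
  rw [← hxm] at hm₂
  omega

variable (z x) in
noncomputable def foldMeet (A : Finset V) : V :=
  @Finset.fold V V (hm.meet z) ⟨hm.meet_comm hc z⟩ ⟨hm.meet_assoc hc z⟩ x id A

@[simp] lemma foldMeet_empty : hm.foldMeet hc z x ∅ = x := rfl

section DecidableEq

variable [DecidableEq V]

lemma foldMeet_insert (A : Finset V) :
    hm.foldMeet hc z x (insert a A) = hm.meet z a (hm.foldMeet hc z x A) :=
  @Finset.fold_insert_idem V V (hm.meet z) ⟨hm.meet_comm hc z⟩ ⟨hm.meet_assoc hc z⟩ _ _ _ _ _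
    ⟨fun _ => hm.meet_self⟩

lemma foldMeet_singleton_of_mem_lowerNeighbors (ha : a ∈ G.lowerNeighbors z x) :
    hm.foldMeet hc z x {a} = a := by
  rw [← insert_empty_eq, foldMeet_insert, foldMeet_empty,
    hm.meet_eq_left (mem_interval_of_mem_lowerNeighbors ha)]

lemma foldMeet_mem_interval (A : Finset V) : hm.foldMeet hc z x A ∈ interval G z x := by
  induction A using Finset.induction_on with
  | empty => exact right_mem_interval
  | insert a A _ ih =>
    rw [foldMeet_insert]
    exact hc.mem_interval_trans hm.meet_mem_interval_right ih

lemma foldMeet_union (A B : Finset V) :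
    hm.foldMeet hc z x (A ∪ B) = hm.meet z (hm.foldMeet hc z x A) (hm.foldMeet hc z x B) := by
  induction A using Finset.induction_on with
  | empty =>
    rw [empty_union, foldMeet_empty, hm.meet_comm hc,
      hm.meet_eq_left (hm.foldMeet_mem_interval hc B)]
  | insert a A _ ih => rw [insert_union, foldMeet_insert, foldMeet_insert, ih, hm.meet_assoc hc]

lemma foldMeet_image_meet (ha : a ∈ interval G z x) (A : Finset V) :
    hm.foldMeet hc z a (A.image (hm.meet z a)) = hm.meet z a (hm.foldMeet hc z x A) := by
  induction A using Finset.induction_on with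
  | empty => rw [image_empty, foldMeet_empty, foldMeet_empty, hm.meet_eq_left ha]
  | insert b A _ ih =>
    rw [image_insert, foldMeet_insert, foldMeet_insert, ih, hm.meet_assoc hc,
      hm.meet_left_comm hc z b a, ← hm.meet_assoc hc z a a, hm.meet_self]

/-- Meeting with one element `a` of `A` maps the others injectively (by `K₂,₃`-freeness) to lower
neighbours of `a`, whose meet with `a` is the meet of `x` and `A`. -/
lemma dist_foldMeet_add_card {A : Finset V} (hA : ↑A ⊆ G.lowerNeighbors z x) :
    G.dist z (hm.foldMeet hc z x A) + #A = G.dist z x := by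
  obtain ⟨n, hn⟩ : ∃ n, #A = n := ⟨_, rfl⟩
  induction n generalizing x A with
  | zero => simp [card_eq_zero.1 hn]
  | succ n ih =>
    obtain ⟨a, haA⟩ := card_pos.1 (by omega : 0 < #A)
    have ha := hA haA
    have hlower : ↑((A.erase a).image (hm.meet z a)) ⊆ G.lowerNeighbors z a := by
      simp only [coe_image, Set.image_subset_iff]
      intro b hb
      exact hm.meet_mem_lowerNeighbors hc ha (hA (mem_of_mem_erase hb)) (ne_of_mem_erase hb).symm
    have hcard : #((A.erase a).image (hm.meet z a)) = n := by
      rw [card_image_of_injOn, card_erase_of_mem haA, hn, Nat.add_sub_cancel]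
      refine (hm.injOn_meet hc ha).mono ?_
      intro b hb
      exact ⟨hA (mem_of_mem_erase hb), ne_of_mem_erase hb⟩
    have := ih hlower hcard
    rw [hm.foldMeet_image_meet hc (mem_interval_of_mem_lowerNeighbors ha), ← foldMeet_insert,
      insert_erase haA] at this
    have ha₂ : G.dist z a + 1 = G.dist z x := ha.2
    omega

lemma dist_foldMeet_foldMeet {A B : Finset V} (hA : ↑A ⊆ G.lowerNeighbors z x)
    (hB : ↑B ⊆ G.lowerNeighbors z x) :
    G.dist (hm.foldMeet hc z x A) (hm.foldMeet hc z x B) = #(A \ B) + #(B \ A) := by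
  have key := hm.dist_add_two_mul_dist_meet (z := z) (x := hm.foldMeet hc z x A)
    (y := hm.foldMeet hc z x B)
  rw [← foldMeet_union] at key
  have hA' := hm.dist_foldMeet_add_card hc hA
  have hB' := hm.dist_foldMeet_add_card hc hB
  have hU := hm.dist_foldMeet_add_card hc (coe_union A B ▸ Set.union_subset hA hB)
  have := card_union_add_card_inter A B
  have := card_sdiff_add_card_inter A B
  have := card_sdiff_add_card_inter B A
  rw [inter_comm B A] at this
  omega

end DecidableEq

variable (z x) in
def lowerCube : Set V := hm.foldMeet hc z x '' {A | ↑A ⊆ G.lowerNeighbors z x}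

lemma self_mem_lowerCube : x ∈ hm.lowerCube hc z x := ⟨∅, by simp, rfl⟩

lemma mem_lowerCube_of_mem_lowerNeighbors (hu : u ∈ G.lowerNeighbors z x) :
    u ∈ hm.lowerCube hc z x := by
  classical
  exact ⟨{u}, by simpa using hu, hm.foldMeet_singleton_of_mem_lowerNeighbors hc hu⟩

lemma eq_or_dist_lt_of_mem_lowerCube (hu : u ∈ hm.lowerCube hc z x) :
    u = x ∨ G.dist z u < G.dist z x := by
  classical
  obtain ⟨A, hA, rfl⟩ := hu
  obtain rfl | hne := A.eq_empty_or_nonempty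
  · exact .inl rfl
  · have := hm.dist_foldMeet_add_card hc hA
    have := card_pos.2 hne
    exact .inr (by omega)

noncomputable def lowerCubeEmbedding (σ : Fin m ↪ V) (hσ : ∀ j, σ j ∈ G.lowerNeighbors z x) :
    cubeGraph m ↪g G :=
  cubeEmbeddingOfDist (fun f => hm.foldMeet hc z x (({j | f j} : Finset (Fin m)).map σ))
    fun f g => by
      classical
      have hsub (s : Finset (Fin m)) : ↑(s.map σ) ⊆ G.lowerNeighbors z x := by
        simpa [Set.subset_def] using fun j _ => hσ j
      rw [hm.dist_foldMeet_foldMeet hc (hsub _) (hsub _), ← Finset.map_sdiff, ← Finset.map_sdiff,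
        card_map, card_map, hammingDist_eq_card_sdiff_add_card_sdiff]

lemma lowerCubeEmbedding_apply (σ : Fin m ↪ V) (hσ : ∀ j, σ j ∈ G.lowerNeighbors z x)
    (f : Fin m → Bool) :
    hm.lowerCubeEmbedding hc σ hσ f = hm.foldMeet hc z x (({j | f j} : Finset (Fin m)).map σ) :=
  rfl

lemma lowerCubeEmbedding_bot (σ : Fin m ↪ V) (hσ : ∀ j, σ j ∈ G.lowerNeighbors z x) :
    hm.lowerCubeEmbedding hc σ hσ ⊥ = x := by
  simp [lowerCubeEmbedding_apply]

lemma lowerCubeEmbedding_update_bot (σ : Fin m ↪ V) (hσ : ∀ j, σ j ∈ G.lowerNeighbors z x)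
    (j : Fin m) : hm.lowerCubeEmbedding hc σ hσ (Function.update ⊥ j true) = σ j := by
  classical
  have hsupp : ({t | Function.update (⊥ : Fin m → Bool) j true t} : Finset (Fin m)) = {j} := by
    ext t
    simp [Function.update_apply]
  rw [lowerCubeEmbedding_apply, hsupp, map_singleton,
    hm.foldMeet_singleton_of_mem_lowerNeighbors hc (hσ j)]

lemma range_lowerCubeEmbedding {σ : Fin m ↪ V} (hσ : ∀ j, σ j ∈ G.lowerNeighbors z x)
    (hrange : Set.range σ = G.lowerNeighbors z x) :
    Set.range (hm.lowerCubeEmbedding hc σ hσ) = hm.lowerCube hc z x := by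
  classical
  ext u
  constructor
  · rintro ⟨f, rfl⟩
    refine ⟨_, ?_, (hm.lowerCubeEmbedding_apply hc σ hσ f).symm⟩
    simpa [Set.subset_def] using fun j _ => hσ j
  · rintro ⟨A, hA, rfl⟩
    refine ⟨fun j => decide (σ j ∈ A), ?_⟩
    rw [lowerCubeEmbedding_apply]
    congr 1
    ext u
    simp only [mem_map, mem_filter, mem_univ, true_and, decide_eq_true_eq]
    refine ⟨by rintro ⟨j, hj, rfl⟩; exact hj, fun hu => ?_⟩
    obtain ⟨j, rfl⟩ := hrange.symm ▸ hA hu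
    exact ⟨j, hu, rfl⟩

lemma exists_iso_lowerCube [Finite V] :
    ∃ k, Nonempty (G.induce (hm.lowerCube hc z x) ≃g cubeGraph k) := by
  obtain ⟨k, ⟨e⟩⟩ := Finite.exists_equiv_fin (G.lowerNeighbors z x)
  let σ : Fin k ↪ V := e.symm.toEmbedding.trans (Function.Embedding.subtype _)
  have hσ (j : Fin k) : σ j ∈ G.lowerNeighbors z x := (e.symm j).2
  have hrange : Set.range σ = G.lowerNeighbors z x := by
    refine Set.Subset.antisymm (Set.range_subset_iff.2 hσ) fun u hu => ⟨e ⟨u, hu⟩, ?_⟩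
    simp [σ]
  rw [← hm.range_lowerCubeEmbedding hc hσ hrange]
  exact ⟨k, ⟨(hm.lowerCubeEmbedding hc σ hσ).isoInduceRange.symm⟩⟩

/-- An embedding of the cube onto `C` sending `⊥` to `x` agrees with a `lowerCubeEmbedding` on `⊥`
and its neighbours, hence everywhere. -/
lemma eq_lowerCube_of_iso {C : Set V} (hxC : x ∈ C)
    (hnbr : ∀ u, G.Adj x u → (u ∈ C ↔ u ∈ G.lowerNeighbors z x))
    (e : G.induce C ≃g cubeGraph m) : C = hm.lowerCube hc z x := by
  let ψ : cubeGraph m ↪g G :=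
    (Embedding.induce C).comp ((cubeGraphXorIso (e ⟨x, hxC⟩)).trans e.symm).toRelEmbedding
  have hψ (f : Fin m → Bool) : ψ f = e.symm (fun j => xor (f j) (e ⟨x, hxC⟩ j)) := rfl
  have hψ_bot : ψ ⊥ = x := by simp [hψ]
  have hrange : Set.range ψ = C := by
    refine Set.Subset.antisymm (Set.range_subset_iff.2 fun f => (e.symm _).2) fun u hu => ?_
    refine ⟨fun j => xor (e ⟨u, hu⟩ j) (e ⟨x, hxC⟩ j), ?_⟩
    simp [hψ]
  let σ : Fin m ↪ V :=
    ⟨fun j => ψ (Function.update ⊥ j true), fun i j hij => by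
      simpa [Function.update_apply, eq_comm] using congrFun (ψ.injective hij) j⟩
  have hadj (j : Fin m) : G.Adj x (σ j) :=
    hψ_bot ▸ ψ.map_rel_iff.2 (cubeGraph_adj_update (by simp))
  have hσ (j : Fin m) : σ j ∈ G.lowerNeighbors z x :=
    (hnbr _ (hadj j)).1 (hrange ▸ Set.mem_range_self _)
  have hσrange : Set.range σ = G.lowerNeighbors z x := by
    refine Set.Subset.antisymm (Set.range_subset_iff.2 hσ) fun u hu => ?_
    obtain ⟨f, rfl⟩ := hrange.symm ▸ (hnbr u hu.1).2 hu
    obtain ⟨j, rfl⟩ := exists_eq_update_bot_of_adj (ψ.map_rel_iff.1 (hψ_bot ▸ hu.1))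
    exact ⟨j, rfl⟩
  have hext : hm.lowerCubeEmbedding hc σ hσ = ψ := by
    refine IsK23Free.cubeGraph_embedding_ext (hm.isK23Free hc)
      (by rw [lowerCubeEmbedding_bot, hψ_bot]) fun f hf => ?_
    obtain ⟨j, rfl⟩ := exists_eq_update_bot_of_adj hf
    exact hm.lowerCubeEmbedding_update_bot hc σ hσ j
  rw [← hrange, ← hext, hm.range_lowerCubeEmbedding hc hσ hσrange]

theorem existsUnique_corner_cube [Finite V] {L : Set V} (hxL : x ∈ L)
    (hL : ∀ w ∈ L, G.dist z w ≤ G.dist z x) (hlt : ∀ w, G.dist z w < G.dist z x → w ∈ L) :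
    ∃! C : Set V, C ⊆ L ∧ x ∈ C ∧ (∀ u ∈ L, G.Adj x u → u ∈ C) ∧
      ∃ k, Nonempty (G.induce C ≃g cubeGraph k) := by
  have hlower {u : V} (hu : u ∈ L) (hxu : G.Adj x u) : u ∈ G.lowerNeighbors z x :=
    ⟨hxu, (hm.dist_add_one_eq_or_of_adj hc z hxu).resolve_left fun h => by
      have := hL u hu; omega⟩
  have hlowerL {u : V} (hu : u ∈ G.lowerNeighbors z x) : u ∈ L := hlt u (by have := hu.2; omega)
  refine ⟨hm.lowerCube hc z x, ⟨fun u hu => ?_, hm.self_mem_lowerCube hc,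
    fun u hu hxu => hm.mem_lowerCube_of_mem_lowerNeighbors hc (hlower hu hxu),
    hm.exists_iso_lowerCube hc⟩, ?_⟩
  · obtain rfl | h := hm.eq_or_dist_lt_of_mem_lowerCube hc hu
    exacts [hxL, hlt u h]
  · rintro C ⟨hCL, hxC, hnbr, k, ⟨e⟩⟩
    exact hm.eq_lowerCube_of_iso hc hxC
      (fun u hxu => ⟨fun hu => hlower (hCL hu) hxu, fun hu => hnbr u (hlowerL hu) hxu⟩) e

end MedianGraph

theorem median_monotone_corner_peeling_general {V : Type*} (G : SimpleGraph V)
    (hconn : G.Connected) (hmed : MedianGraph G)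
    (z : V) (n : ℕ) (v : Fin n ≃ V)
    (hmono : ∀ i j : Fin n, i ≤ j → G.dist z (v i) ≤ G.dist z (v j)) :
    ∀ i : Fin n, ∃! C : Set V,
      C ⊆ (↑v : Fin n → V) '' {j | j ≤ i} ∧ v i ∈ C ∧
      (∀ u ∈ (↑v : Fin n → V) '' {j | j ≤ i}, G.Adj (v i) u → u ∈ C) ∧
      ∃ k : ℕ, Nonempty (G.induce C ≃g cubeGraph k) := by
  intro i
  have : Finite V := .of_equiv _ v
  refine hmed.existsUnique_corner_cube hconn (z := z) ⟨i, le_refl i, rfl⟩ ?_ fun w hw => ?_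
  · rintro _ ⟨j, hj, rfl⟩
    exact hmono j i hj
  · refine ⟨v.symm w, show v.symm w ≤ i from not_lt.1 fun hi => ?_, v.apply_symm_apply w⟩
    have := v.apply_symm_apply w ▸ hmono i (v.symm w) hi.le
    omega

/-- Any ordering of the vertices of a finite median graph by nondecreasing distance to a
basepoint `z` is a corner peeling: each `vᵢ` together with all its neighbors in the
level graph `Gᵢ = G[{v₁,…,vᵢ}]` lies in a unique cube of `Gᵢ`. -/
theorem median_monotone_corner_peeling {V : Type*} [Fintype V] (G : SimpleGraph V)
    (hconn : G.Connected) (hmed : MedianGraph G)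
    (z : V) (n : ℕ) (hn : 0 < n) (v : Fin n ≃ V)
    (h0 : v ⟨0, hn⟩ = z)
    (hmono : ∀ i j : Fin n, i ≤ j → G.dist z (v i) ≤ G.dist z (v j)) :
    ∀ i : Fin n, ∃! C : Set V,
      C ⊆ (↑v : Fin n → V) '' {j | j ≤ i} ∧ v i ∈ C ∧
      (∀ u ∈ (↑v : Fin n → V) '' {j | j ≤ i}, G.Adj (v i) u → u ∈ C) ∧
      ∃ k : ℕ, Nonempty (G.induce C ≃g cubeGraph k) :=
  median_monotone_corner_peeling_general G hconn hmed z n v hmono
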